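/- arXiv:1111.7247 — 2 statements merged into one kernel-verified Lean document; each statement's English description precedes it below -/
import Mathlib

section
/- Let A be an m×N real matrix with Gram matrix G = AᵀA, let s ≥ 1 be an integer and δ ∈ (0,1). If |G_{qq} − 1| ≤ δ/2 for every q ∈ {1,…,N} and |G_{pq}| ≤ δ/(2s) for every pair p ≠ q, then A satisfies RIP(s, δ); that is, (1 − δ)‖f‖₂² ≤ ‖A f‖₂² ≤ (1 + δ)‖f‖₂² for every f ∈ ℝ^N with at most s nonzero entries. -/
open Finset Matrix

/-- `f` has at most `s` nonzero entries. -/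
def IsSparse {N : Type*} [Fintype N] [DecidableEq N] (s : ℕ) (f : N → ℝ) : Prop :=
  ∃ T : Finset N, T.card ≤ s ∧ ∀ i ∉ T, f i = 0

/-- `A` satisfies the Restricted Isometry Property of order `s` with constant `δ`. -/
def IsRIP {M N : Type*} [Fintype M] [Fintype N] [DecidableEq N]
    (A : Matrix M N ℝ) (s : ℕ) (δ : ℝ) : Prop :=
  ∀ f : N → ℝ, IsSparse s f →
    (1 - δ) * ∑ i, f i ^ 2 ≤ ∑ j, (A.mulVec f j) ^ 2 ∧
      ∑ j, (A.mulVec f j) ^ 2 ≤ (1 + δ) * ∑ i, f i ^ 2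

/-!
Write `AᵀA = 1 + E`. The quadratic form `f ⬝ᵥ AᵀA f = ‖A f‖²` then differs from `‖f‖₂²` by
`f ⬝ᵥ E f`, and the entrywise bounds on `E` give `|f ⬝ᵥ E f| ≤ (δ/2)‖f‖₂² + (δ/(2s))‖f‖₁²`.
For `s`-sparse `f`, Cauchy–Schwarz on the support gives `‖f‖₁² ≤ s‖f‖₂²`, so the error is
at most `δ‖f‖₂²`.
-/

theorem IsSparse.sq_sum_abs_le {N : Type*} [Fintype N] [DecidableEq N] {s : ℕ} {f : N → ℝ}
    (hf : IsSparse s f) : (∑ i, |f i|) ^ 2 ≤ s * ∑ i, f i ^ 2 := by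
  obtain ⟨T, hT, hfT⟩ := hf
  have hsupp : ∀ i ∉ T, |f i| = 0 := fun i hi => by rw [hfT i hi, abs_zero]
  calc (∑ i, |f i|) ^ 2 = (∑ i ∈ T, |f i|) ^ 2 := by
        rw [sum_subset (subset_univ T) fun i _ hi => hsupp i hi]
    _ ≤ #T * ∑ i ∈ T, |f i| ^ 2 := sq_sum_le_card_mul_sum_sq
    _ ≤ s * ∑ i, f i ^ 2 := by
        simp only [sq_abs]
        gcongr ?_ * ?_
        · exact_mod_cast hT
        · exact sum_le_sum_of_subset_of_nonneg (subset_univ T) fun i _ _ => sq_nonneg (f i)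

theorem sum_sq_mulVec_eq_dotProduct_gram_mulVec {M N : Type*} [Fintype M] [Fintype N]
    (A : Matrix M N ℝ) (f : N → ℝ) : ∑ j, (A *ᵥ f) j ^ 2 = f ⬝ᵥ (Aᵀ * A) *ᵥ f := by
  rw [← mulVec_mulVec, dotProduct_mulVec, vecMul_transpose, dotProduct]
  simp only [sq]

theorem dotProduct_mulVec_eq_sum_sum {N : Type*} [Fintype N] (E : Matrix N N ℝ) (f : N → ℝ) :
    f ⬝ᵥ E *ᵥ f = ∑ p, ∑ q, f p * f q * E p q := by
  simp only [dotProduct, mulVec, mul_sum]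
  refine sum_congr rfl fun p _ => sum_congr rfl fun q _ => by ring

theorem abs_dotProduct_mulVec_le {N : Type*} [Fintype N] [DecidableEq N] (E : Matrix N N ℝ)
    (f : N → ℝ) {a b : ℝ} (hb : 0 ≤ b) (hdiag : ∀ p, |E p p| ≤ a)
    (hoff : ∀ p q, p ≠ q → |E p q| ≤ b) :
    |f ⬝ᵥ E *ᵥ f| ≤ a * ∑ i, f i ^ 2 + b * (∑ i, |f i|) ^ 2 := by
  have hentry : ∀ p q, |E p q| ≤ (if p = q then a else 0) + b := by
    intro p q
    split_ifs with hpq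
    · subst hpq; linarith [hdiag p]
    · simpa using hoff p q hpq
  calc |f ⬝ᵥ E *ᵥ f| ≤ ∑ p, ∑ q, |f p| * |f q| * ((if p = q then a else 0) + b) := by
        rw [dotProduct_mulVec_eq_sum_sum]
        refine (abs_sum_le_sum_abs _ _).trans (sum_le_sum fun p _ => ?_)
        refine (abs_sum_le_sum_abs _ _).trans (sum_le_sum fun q _ => ?_)
        rw [abs_mul, abs_mul]
        gcongr
        exact hentry p q
    _ = a * ∑ i, f i ^ 2 + b * (∑ i, |f i|) ^ 2 := by
        simp only [mul_add, sum_add_distrib, mul_ite, mul_zero, sum_ite_eq, mem_univ, if_true]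
        rw [sq, sum_mul_sum, mul_sum, mul_sum]
        congr 1
        · exact sum_congr rfl fun p _ => by rw [abs_mul_abs_self]; ring
        · exact sum_congr rfl fun p _ => by rw [mul_sum]; exact sum_congr rfl fun q _ => by ring

theorem isRIP_of_abs_dotProduct_sub_one_mulVec_le {M N : Type*} [Fintype M] [Fintype N]
    [DecidableEq N] (A : Matrix M N ℝ) (s : ℕ) (δ : ℝ)
    (h : ∀ f, IsSparse s f → |f ⬝ᵥ (Aᵀ * A - 1) *ᵥ f| ≤ δ * ∑ i, f i ^ 2) : IsRIP A s δ := by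
  intro f hf
  have hQ : ∑ j, (A *ᵥ f) j ^ 2 = ∑ i, f i ^ 2 + f ⬝ᵥ (Aᵀ * A - 1) *ᵥ f := by
    rw [sub_mulVec, one_mulVec, dotProduct_sub, ← sum_sq_mulVec_eq_dotProduct_gram_mulVec,
      dotProduct]
    simp only [sq]
    ring
  obtain ⟨hlow, hupp⟩ := abs_le.mp (h f hf)
  constructor <;> linarith

theorem gershgorin_RIP_step_general (m N : ℕ) (A : Matrix (Fin m) (Fin N) ℝ)
    (G : Matrix (Fin N) (Fin N) ℝ) (hG : G = Aᵀ * A)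
    (s : ℕ) (δ : ℝ) (hδ : δ ∈ Set.Ioo (0 : ℝ) 1)
    (hdiag : ∀ q, |G q q - 1| ≤ δ / 2)
    (hoff : ∀ p q, p ≠ q → |G p q| ≤ δ / (2 * s)) :
    IsRIP A s δ := by
  subst hG
  refine isRIP_of_abs_dotProduct_sub_one_mulVec_le A s δ fun f hf => ?_
  have hδ0 : 0 ≤ δ := hδ.1.le
  have hS : 0 ≤ ∑ i, f i ^ 2 := by positivity
  -- `s / s ≤ 1` also covers `s = 0`, where `δ / (2 * s) = 0`.
  have hscale : δ / (2 * s) * s ≤ δ / 2 :=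
    calc δ / (2 * s) * s = δ / 2 * (s / s) := by ring
      _ ≤ δ / 2 := mul_le_of_le_one_right (by positivity) (div_self_le_one _)
  calc |f ⬝ᵥ (Aᵀ * A - 1) *ᵥ f|
      ≤ δ / 2 * ∑ i, f i ^ 2 + δ / (2 * s) * (∑ i, |f i|) ^ 2 :=
        abs_dotProduct_mulVec_le _ f (by positivity) (by simpa using hdiag)
          fun p q hpq => by simpa [one_apply_ne hpq] using hoff p q hpq
    _ ≤ δ / 2 * ∑ i, f i ^ 2 + δ / (2 * s) * (s * ∑ i, f i ^ 2) := by
        gcongr; exact hf.sq_sum_abs_le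
    _ ≤ δ * ∑ i, f i ^ 2 := by
        rw [← mul_assoc]
        linarith [mul_le_mul_of_nonneg_right hscale hS]

/-- the Geršgorin-disc step.  If the Gram matrix `G = AᵀA` of an `m × N` real
matrix `A` satisfies `|G_{qq} - 1| ≤ δ/2` on the diagonal and `|G_{pq}| ≤ δ/(2s)` off the
diagonal, then `A` satisfies `RIP(s, δ)`. -/
theorem gershgorin_RIP_step (m N : ℕ) (A : Matrix (Fin m) (Fin N) ℝ)
    (G : Matrix (Fin N) (Fin N) ℝ) (hG : G = Aᵀ * A)
    (s : ℕ) (hs : 1 ≤ s) (δ : ℝ) (hδ : δ ∈ Set.Ioo (0 : ℝ) 1)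
    (hdiag : ∀ q, |G q q - 1| ≤ δ / 2)
    (hoff : ∀ p q, p ≠ q → |G p q| ≤ δ / (2 * s)) :
    IsRIP A s δ :=
  gershgorin_RIP_step_general m N A G hG s δ hδ hdiag hoff
end

section
/- Let h be a random mask on an n₁×n₂ grid whose entries are i.i.d., equal to ±√(d/n) with probability 1/2 each, let A ∈ ℝ^{m×n} be the spatial-domain CCA sensing matrix built from h, and let G = AᵀA. Let p = (p₁,p₂) ≠ q = (q₁,q₂) be index pairs such that mod(p₁ − q₁, d₁) ≠ 0 or mod(p₂ − q₂, d₂) ≠ 0. Then each of the m = n/d terms of the sum defining G_{pq} involves a distinct pair of mask entries, the terms are independent with mean zero and each bounded in absolute value by d/n, and for every δ_o > 0 and s ≥ 1, P(|G_{pq}| ≥ δ_o/s) ≤ 2 exp(−n δ_o² / (2 d s²)). -/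
open Finset Matrix MeasureTheory ProbabilityTheory

/-- The spatial-domain CCA sensing matrix built from a mask `h` on an `n₁ × n₂` grid. -/
def ccaMatrix (n₁ n₂ d₁ d₂ : ℕ) (h : ZMod n₁ → ZMod n₂ → ℝ) :
    Matrix (Fin (n₁ / d₁) × Fin (n₂ / d₂)) (ZMod n₁ × ZMod n₂) ℝ :=
  fun l k => h ((((l.1 : ℕ) * d₁ : ℕ) : ZMod n₁) - k.1) ((((l.2 : ℕ) * d₂ : ℕ) : ZMod n₂) - k.2)

/-- The pair of mask indices selected by row `l` and column `r` of the CCA matrix. -/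
def maskIdx (n₁ n₂ d₁ d₂ : ℕ) (r : ZMod n₁ × ZMod n₂)
    (l : Fin (n₁ / d₁) × Fin (n₂ / d₂)) : ZMod n₁ × ZMod n₂ :=
  (((((l.1 : ℕ) * d₁ : ℕ) : ZMod n₁) - r.1), ((((l.2 : ℕ) * d₂ : ℕ) : ZMod n₂) - r.2))

/-!
The `l`-th term of `G_{pq}` is the product of the mask entries at `maskIdx p l` and
`maskIdx q l`. Row offsets are distinct multiples of `(d₁, d₂)` modulo `(n₁, n₂)`, and the entries
read by columns `p` and `q` differ by `p - q`, which is not such a multiple; so the `2m` entries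
involved are distinct. The terms are therefore products over disjoint pairs of independent
`±√(d/n)` signs: independent, centred and bounded by `d/n`. Hoeffding's inequality, with
`m · (d/n)² = d/n`, gives the tail bound.
-/

namespace ZMod

variable {n d : ℕ} [NeZero n]

theorem natCast_fin_mul_injective (hd : d ∣ n) :
    Function.Injective fun a : Fin (n / d) => (((a : ℕ) * d : ℕ) : ZMod n) := by
  intro a b h
  have hd0 : 0 < d := Nat.pos_of_dvd_of_pos hd (NeZero.pos n)
  have hlt (x : Fin (n / d)) : (x : ℕ) * d < n :=
    (Nat.lt_div_iff_mul_lt_of_dvd hd0.ne' hd).1 x.2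
  have := congrArg val h
  rw [val_cast_of_lt (hlt a), val_cast_of_lt (hlt b)] at this
  exact Fin.ext (Nat.eq_of_mul_eq_mul_right hd0 this)

theorem dvd_val_natCast_mul_sub_natCast_mul (hd : d ∣ n) (a b : ℕ) :
    d ∣ ((((a * d : ℕ) : ZMod n) - ((b * d : ℕ) : ZMod n)).val) := by
  rw [← natCast_eq_zero_iff, natCast_val, cast_sub hd, cast_natCast hd,
    cast_natCast hd]
  simp

end ZMod

theorem Function.Injective.prod_bool_ite {I J : Type*} {a b : I → J}
    (ha : Function.Injective a) (hb : Function.Injective b) (hab : ∀ i j, a i ≠ b j) :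
    Function.Injective fun ib : I × Bool => if ib.2 then a ib.1 else b ib.1 := by
  rintro ⟨i, _ | _⟩ ⟨j, _ | _⟩ h <;> simp only [Bool.false_eq_true, if_true, if_false] at h
  · rw [hb h]
  · exact absurd h.symm (hab j i)
  · exact absurd h (hab i j)
  · rw [ha h]

section CCA

variable {n₁ n₂ d₁ d₂ : ℕ} [NeZero n₁] [NeZero n₂]

theorem maskIdx_injective (hd₁ : d₁ ∣ n₁) (hd₂ : d₂ ∣ n₂) (r : ZMod n₁ × ZMod n₂) :
    Function.Injective (maskIdx n₁ n₂ d₁ d₂ r) := by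
  intro l l' h
  simp only [maskIdx, Prod.mk.injEq, sub_left_inj] at h
  exact Prod.ext (ZMod.natCast_fin_mul_injective hd₁ h.1) (ZMod.natCast_fin_mul_injective hd₂ h.2)

theorem maskIdx_ne_of_not_dvd (hd₁ : d₁ ∣ n₁) (hd₂ : d₂ ∣ n₂) {p q : ZMod n₁ × ZMod n₂}
    (hmod : ¬ d₁ ∣ (p.1 - q.1).val ∨ ¬ d₂ ∣ (p.2 - q.2).val)
    (l l' : Fin (n₁ / d₁) × Fin (n₂ / d₂)) :
    maskIdx n₁ n₂ d₁ d₂ p l ≠ maskIdx n₁ n₂ d₁ d₂ q l' := by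
  intro h
  simp only [maskIdx, Prod.mk.injEq] at h
  rcases hmod with h₁ | h₂
  · rw [show p.1 - q.1 = ((l.1 * d₁ : ℕ) : ZMod n₁) - ((l'.1 * d₁ : ℕ) : ZMod n₁) by
      linear_combination -h.1] at h₁
    exact h₁ (ZMod.dvd_val_natCast_mul_sub_natCast_mul hd₁ _ _)
  · rw [show p.2 - q.2 = ((l.2 * d₂ : ℕ) : ZMod n₂) - ((l'.2 * d₂ : ℕ) : ZMod n₂) by
      linear_combination -h.2] at h₂
    exact h₂ (ZMod.dvd_val_natCast_mul_sub_natCast_mul hd₂ _ _)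

theorem card_rows_mul_sq_ratio (hd₁ : d₁ ∣ n₁) (hd₂ : d₂ ∣ n₂) :
    (Fintype.card (Fin (n₁ / d₁) × Fin (n₂ / d₂)) : ℝ) * ((d₁ * d₂ : ℝ) / (n₁ * n₂)) ^ 2 =
      (d₁ * d₂ : ℝ) / (n₁ * n₂) := by
  have : (d₁ : ℝ) ≠ 0 := Nat.cast_ne_zero.2 (Nat.pos_of_dvd_of_pos hd₁ (NeZero.pos n₁)).ne'
  have : (d₂ : ℝ) ≠ 0 := Nat.cast_ne_zero.2 (Nat.pos_of_dvd_of_pos hd₂ (NeZero.pos n₂)).ne'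
  rw [Fintype.card_prod, Fintype.card_fin, Fintype.card_fin, Nat.cast_mul, Nat.cast_div hd₁ ‹_›,
    Nat.cast_div hd₂ ‹_›]
  field_simp

end CCA

namespace ProbabilityTheory

theorem iIndepFun.curry {ι κ Ω 𝓧 : Type*} {mΩ : MeasurableSpace Ω} [MeasurableSpace 𝓧]
    {P : Measure Ω} {X : ι → κ → Ω → 𝓧} (mX : ∀ i j, Measurable (X i j))
    (h : iIndepFun (fun p : ι × κ => X p.1 p.2) P) :
    iIndepFun (fun i ω j => X i j ω) P := by
  have := h.isProbabilityMeasure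
  have (i : ι) (j : κ) : IsProbabilityMeasure (P.map (X i j)) :=
    Measure.isProbabilityMeasure_map (mX i j).aemeasurable
  have hjoint : P.map (fun ω (p : ι × κ) => X p.1 p.2 ω) =
      Measure.infinitePi fun p : ι × κ => P.map (X p.1 p.2) :=
    (iIndepFun_iff_map_fun_eq_infinitePi_map fun p : ι × κ => mX p.1 p.2).1 h
  have hrow (i : ι) : P.map (fun ω j => X i j ω) = Measure.infinitePi fun j => P.map (X i j) :=
    (iIndepFun_iff_map_fun_eq_infinitePi_map (mX i)).1
      (h.precomp (g := fun j => (i, j)) fun _ _ hj => (Prod.mk.inj hj).2)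
  have hcurry : (MeasurableEquiv.curry ι κ 𝓧) ∘ (fun ω (p : ι × κ) => X p.1 p.2 ω) =
      fun ω i j => X i j ω := rfl
  rw [iIndepFun_iff_map_fun_eq_infinitePi_map (fun i => measurable_pi_lambda _ (mX i)),
    ← hcurry, ← Measure.map_map (by fun_prop) (by fun_prop), hjoint,
    Measure.infinitePi_map_curry fun i j => P.map (X i j)]
  simp_rw [hrow]

theorem iIndepFun.mul_of_injective {I J Ω β : Type*} {mΩ : MeasurableSpace Ω} {μ : Measure Ω}
    [MeasurableSpace β] [Mul β] [MeasurableMul₂ β] {X : J → Ω → β}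
    (mX : ∀ j, Measurable (X j)) (h : iIndepFun X μ) {a b : I → J}
    (hab : Function.Injective fun ib : I × Bool => if ib.2 then a ib.1 else b ib.1) :
    iIndepFun (fun i ω => X (a i) ω * X (b i) ω) μ :=
  ((h.precomp hab).curry (X := fun i (t : Bool) => X (if t then a i else b i))
    fun _ _ => mX _).comp (fun _ v => v true * v false) fun _ => by fun_prop

end ProbabilityTheory

section TwoPoint

variable {Ω : Type*} {mΩ : MeasurableSpace Ω} {μ : Measure Ω} [IsProbabilityMeasure μ]
  {Y : Ω → ℝ} {c : ℝ}

theorem ae_eq_or_eq_neg_of_measure_eq_half (hY : Measurable Y) (hc : c ≠ 0)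
    (h₁ : μ {ω | Y ω = c} = 1 / 2) (h₂ : μ {ω | Y ω = -c} = 1 / 2) :
    ∀ᵐ ω ∂μ, Y ω = c ∨ Y ω = -c := by
  have hA : MeasurableSet {ω | Y ω = c} := hY (measurableSet_singleton c)
  have hA' : MeasurableSet {ω | Y ω = -c} := hY (measurableSet_singleton (-c))
  have hdisj : Disjoint {ω | Y ω = c} {ω | Y ω = -c} :=
    Set.disjoint_left.2 fun ω h₁ h₂ => hc (by linarith [h₁.symm.trans h₂])
  rw [ae_iff_measure_eq (p := fun ω => Y ω = c ∨ Y ω = -c) (hA.union hA').nullMeasurableSet,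
    Set.ofPred_or, measure_union hdisj hA', h₁, h₂, ENNReal.add_halves, measure_univ]

theorem integral_eq_zero_of_measure_eq_half (hY : Measurable Y) (hc : c ≠ 0)
    (h₁ : μ {ω | Y ω = c} = 1 / 2) (h₂ : μ {ω | Y ω = -c} = 1 / 2) :
    ∫ ω, Y ω ∂μ = 0 := by
  have hA : MeasurableSet {ω | Y ω = c} := hY (measurableSet_singleton c)
  have hA' : MeasurableSet {ω | Y ω = -c} := hY (measurableSet_singleton (-c))
  have hY_eq : Y =ᵐ[μ] fun ω => {ω | Y ω = c}.indicator (fun _ => c) ω +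
      {ω | Y ω = -c}.indicator (fun _ => -c) ω := by
    filter_upwards [ae_eq_or_eq_neg_of_measure_eq_half hY hc h₁ h₂] with ω hω
    have : c ≠ -c := fun h => hc (by linarith)
    rcases hω with hω | hω <;> simp [Set.indicator, hω, this, this.symm]
  rw [integral_congr_ae hY_eq, integral_add ((integrable_const c).indicator hA)
    ((integrable_const (-c)).indicator hA'), integral_indicator_const _ hA,
    integral_indicator_const _ hA', measureReal_def, measureReal_def, h₁, h₂]
  simp

theorem ae_abs_eq_of_measure_eq_half (hY : Measurable Y) (hc : c ≠ 0)
    (h₁ : μ {ω | Y ω = c} = 1 / 2) (h₂ : μ {ω | Y ω = -c} = 1 / 2) :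
    ∀ᵐ ω ∂μ, |Y ω| = |c| :=
  (ae_eq_or_eq_neg_of_measure_eq_half hY hc h₁ h₂).mono fun ω h => by
    rcases h with h | h <;> simp [h]

theorem integral_mul_eq_zero_of_measure_eq_half {Z : Ω → ℝ} (hYZ : IndepFun Y Z μ)
    (hY : Measurable Y) (hZ : Measurable Z) (hc : c ≠ 0)
    (h₁ : μ {ω | Y ω = c} = 1 / 2) (h₂ : μ {ω | Y ω = -c} = 1 / 2) :
    ∫ ω, Y ω * Z ω ∂μ = 0 := by
  rw [hYZ.integral_fun_mul_eq_mul_integral hY.aestronglyMeasurable hZ.aestronglyMeasurable,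
    integral_eq_zero_of_measure_eq_half hY hc h₁ h₂, zero_mul]

end TwoPoint

theorem measure_abs_sum_ge_le_of_iIndepFun {Ω ι : Type*} {mΩ : MeasurableSpace Ω}
    {μ : Measure Ω} [IsProbabilityMeasure μ] [Fintype ι] {X : ι → Ω → ℝ}
    (h : iIndepFun X μ) (mX : ∀ i, AEMeasurable (X i) μ) {b : ℝ}
    (hb : ∀ i, ∀ᵐ ω ∂μ, |X i ω| ≤ b) (h0 : ∀ i, μ[X i] = 0) {ε : ℝ} (hε : 0 ≤ ε) :
    μ {ω | ε ≤ |∑ i, X i ω|} ≤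
      ENNReal.ofReal (2 * Real.exp (-ε ^ 2 / (2 * Fintype.card ι * b ^ 2))) := by
  have hIcc (i : ι) : ∀ᵐ ω ∂μ, X i ω ∈ Set.Icc (-b) b := by
    filter_upwards [hb i] with ω hω using abs_le.1 hω
  have hsub (i : ι) := hasSubgaussianMGF_of_mem_Icc_of_integral_eq_zero (mX i) (hIcc i) (h0 i)
  have hvar : ((∑ _i : ι, (‖b - -b‖₊ / 2) ^ 2 : NNReal) : ℝ) = Fintype.card ι * b ^ 2 := by
    simp [← two_mul, mul_div_cancel_left₀, sq_abs]
  have hupper := HasSubgaussianMGF.measure_sum_ge_le_of_iIndepFun h (s := univ)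
    (fun i _ => hsub i) hε
  have hlower := HasSubgaussianMGF.measure_sum_ge_le_of_iIndepFun
    (h.comp (fun _ => Neg.neg) fun _ => measurable_neg) (s := univ) (fun i _ => (hsub i).neg) hε
  rw [hvar] at hupper hlower
  calc μ {ω | ε ≤ |∑ i, X i ω|}
      ≤ μ ({ω | ε ≤ ∑ i, X i ω} ∪ {ω | ε ≤ ∑ i, -X i ω}) := by
        refine measure_mono fun ω hω => ?_
        simpa [le_abs', Finset.sum_neg_distrib, le_neg, or_comm] using hω
    _ ≤ μ {ω | ε ≤ ∑ i, X i ω} + μ {ω | ε ≤ ∑ i, -X i ω} := measure_union_le _ _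
    _ ≤ _ := by
        rw [← ofReal_measureReal, ← ofReal_measureReal, ← ENNReal.ofReal_add (by positivity)
          (by positivity), two_mul, mul_assoc]
        exact ENNReal.ofReal_le_ofReal (add_le_add hupper hlower)

theorem cca_gram_offdiag_independent_case_general
    (n₁ n₂ d₁ d₂ : ℕ) [NeZero n₁] [NeZero n₂]
    (hd₁ : d₁ ∣ n₁) (hd₂ : d₂ ∣ n₂)
    (Ω : Type) (mΩ : MeasurableSpace Ω) (μ : Measure Ω) (hμ : IsProbabilityMeasure μ)
    (H : Ω → ZMod n₁ → ZMod n₂ → ℝ)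
    (hmeas : ∀ i j, Measurable fun ω => H ω i j)
    (hindep : iIndepFun
      (fun (ij : ZMod n₁ × ZMod n₂) ω => H ω ij.1 ij.2) μ)
    (hdist : ∀ i j,
      μ {ω | H ω i j = Real.sqrt ((d₁ * d₂ : ℝ) / (n₁ * n₂ : ℝ))} = 1/2 ∧
      μ {ω | H ω i j = -Real.sqrt ((d₁ * d₂ : ℝ) / (n₁ * n₂ : ℝ))} = 1/2)
    (p q : ZMod n₁ × ZMod n₂)
    (hmod : ¬ (d₁ : ℕ) ∣ (p.1 - q.1).val ∨ ¬ (d₂ : ℕ) ∣ (p.2 - q.2).val)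
    -- the `l`-th term of the sum defining `G_{pq}`
    (T : (Fin (n₁ / d₁) × Fin (n₂ / d₂)) → Ω → ℝ)
    (hT : ∀ l ω, T l ω =
      ccaMatrix n₁ n₂ d₁ d₂ (H ω) l p * ccaMatrix n₁ n₂ d₁ d₂ (H ω) l q) :
    -- each term involves a distinct pair of mask entries
    (Function.Injective (fun lb : (Fin (n₁ / d₁) × Fin (n₂ / d₂)) × Bool =>
        if lb.2 then maskIdx n₁ n₂ d₁ d₂ p lb.1 else maskIdx n₁ n₂ d₁ d₂ q lb.1)) ∧
    -- the terms are independent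
    iIndepFun T μ ∧
    -- each term has mean zero
    (∀ l, ∫ ω, T l ω ∂μ = 0) ∧
    -- each term is bounded in absolute value by `d/n`
    (∀ l, ∀ᵐ ω ∂μ, |T l ω| ≤ (d₁ * d₂ : ℝ) / (n₁ * n₂ : ℝ)) ∧
    -- the Hoeffding bound
    (∀ (δo : ℝ), 0 < δo → ∀ (s : ℕ), 1 ≤ s →
      μ {ω | δo / s ≤
          |((ccaMatrix n₁ n₂ d₁ d₂ (H ω))ᵀ * ccaMatrix n₁ n₂ d₁ d₂ (H ω)) p q|}
        ≤ ENNReal.ofReal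
            (2 * Real.exp (-((n₁ : ℝ) * n₂) * δo ^ 2 /
              (2 * ((d₁ : ℝ) * d₂) * (s : ℝ) ^ 2)))) := by
  have hd₁0 : 0 < d₁ := Nat.pos_of_dvd_of_pos hd₁ (NeZero.pos n₁)
  have hd₂0 : 0 < d₂ := Nat.pos_of_dvd_of_pos hd₂ (NeZero.pos n₂)
  set B : ℝ := (d₁ * d₂ : ℝ) / (n₁ * n₂ : ℝ) with hB_def
  have hB : 0 < B := div_pos (mul_pos (Nat.cast_pos.2 hd₁0) (Nat.cast_pos.2 hd₂0))
    (mul_pos (Nat.cast_pos.2 (NeZero.pos n₁)) (Nat.cast_pos.2 (NeZero.pos n₂)))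
  have hc : Real.sqrt B ≠ 0 := (Real.sqrt_pos.2 hB).ne'
  set X : ZMod n₁ × ZMod n₂ → Ω → ℝ := fun ij ω => H ω ij.1 ij.2
  have hXmeas (ij : ZMod n₁ × ZMod n₂) : Measurable (X ij) := hmeas ij.1 ij.2
  have hinj := (maskIdx_injective hd₁ hd₂ p).prod_bool_ite (maskIdx_injective hd₁ hd₂ q)
    (maskIdx_ne_of_not_dvd hd₁ hd₂ hmod)
  have hT' : T = fun l ω => X (maskIdx n₁ n₂ d₁ d₂ p l) ω * X (maskIdx n₁ n₂ d₁ d₂ q l) ω :=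
    funext₂ hT
  have hindepT : iIndepFun T μ := hT' ▸ hindep.mul_of_injective hXmeas hinj
  have hmean (l : Fin (n₁ / d₁) × Fin (n₂ / d₂)) : ∫ ω, T l ω ∂μ = 0 := hT' ▸
    integral_mul_eq_zero_of_measure_eq_half
      (hindep.indepFun (maskIdx_ne_of_not_dvd hd₁ hd₂ hmod l l)) (hXmeas _) (hXmeas _) hc
      (hdist _ _).1 (hdist _ _).2
  have hbound (l : Fin (n₁ / d₁) × Fin (n₂ / d₂)) : ∀ᵐ ω ∂μ, |T l ω| ≤ B := by
    filter_upwards [ae_abs_eq_of_measure_eq_half (hXmeas _) hc (hdist _ _).1 (hdist _ _).2,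
      ae_abs_eq_of_measure_eq_half (hXmeas _) hc (hdist _ _).1 (hdist _ _).2] with ω ha hb
    rw [hT', abs_mul, ha, hb, abs_mul_abs_self, Real.mul_self_sqrt hB.le]
  refine ⟨hinj, hindepT, hmean, hbound, fun δo hδo s _ => ?_⟩
  have hG (ω : Ω) : ((ccaMatrix n₁ n₂ d₁ d₂ (H ω))ᵀ * ccaMatrix n₁ n₂ d₁ d₂ (H ω)) p q =
      ∑ l, T l ω := by
    simp [Matrix.mul_apply, hT]
  simp_rw [hG]
  calc _ ≤ ENNReal.ofReal (2 * Real.exp (-(δo / s) ^ 2 /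
        (2 * Fintype.card (Fin (n₁ / d₁) × Fin (n₂ / d₂)) * B ^ 2))) :=
      measure_abs_sum_ge_le_of_iIndepFun hindepT
        (fun l => (hT' ▸ (hXmeas _).mul (hXmeas _) : Measurable (T l)).aemeasurable) hbound
        hmean (by positivity)
    _ = _ := by
      rw [mul_assoc, hB_def, card_rows_mul_sq_ratio hd₁ hd₂]
      field_simp

/-- off-diagonal Gram entries of the CCA matrix, fully independent case.
If `mod(p₁ - q₁, d₁) ≠ 0` or `mod(p₂ - q₂, d₂) ≠ 0` then each of the `m = n/d` terms of
`G_{pq} = ∑_l A_{lp} A_{lq}` involves a distinct pair of mask entries; the terms are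
independent, mean zero and bounded by `d/n`; and for all `δₒ > 0`, `s ≥ 1`,
`P(|G_{pq}| ≥ δₒ/s) ≤ 2 exp(-n δₒ² / (2 d s²))`. -/
theorem cca_gram_offdiag_independent_case
    (n₁ n₂ d₁ d₂ : ℕ) [NeZero n₁] [NeZero n₂]
    (hd₁ : d₁ ∣ n₁) (hd₂ : d₂ ∣ n₂) (hd₁0 : 0 < d₁) (hd₂0 : 0 < d₂)
    (Ω : Type) (mΩ : MeasurableSpace Ω) (μ : Measure Ω) (hμ : IsProbabilityMeasure μ)
    (H : Ω → ZMod n₁ → ZMod n₂ → ℝ)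
    (hmeas : ∀ i j, Measurable fun ω => H ω i j)
    (hindep : iIndepFun
      (fun (ij : ZMod n₁ × ZMod n₂) ω => H ω ij.1 ij.2) μ)
    (hdist : ∀ i j,
      μ {ω | H ω i j = Real.sqrt ((d₁ * d₂ : ℝ) / (n₁ * n₂ : ℝ))} = 1/2 ∧
      μ {ω | H ω i j = -Real.sqrt ((d₁ * d₂ : ℝ) / (n₁ * n₂ : ℝ))} = 1/2)
    (p q : ZMod n₁ × ZMod n₂) (hpq : p ≠ q)
    (hmod : ¬ (d₁ : ℕ) ∣ (p.1 - q.1).val ∨ ¬ (d₂ : ℕ) ∣ (p.2 - q.2).val)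
    -- the `l`-th term of the sum defining `G_{pq}`
    (T : (Fin (n₁ / d₁) × Fin (n₂ / d₂)) → Ω → ℝ)
    (hT : ∀ l ω, T l ω =
      ccaMatrix n₁ n₂ d₁ d₂ (H ω) l p * ccaMatrix n₁ n₂ d₁ d₂ (H ω) l q) :
    -- each term involves a distinct pair of mask entries
    (Function.Injective (fun lb : (Fin (n₁ / d₁) × Fin (n₂ / d₂)) × Bool =>
        if lb.2 then maskIdx n₁ n₂ d₁ d₂ p lb.1 else maskIdx n₁ n₂ d₁ d₂ q lb.1)) ∧
    -- the terms are independent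
    iIndepFun T μ ∧
    -- each term has mean zero
    (∀ l, ∫ ω, T l ω ∂μ = 0) ∧
    -- each term is bounded in absolute value by `d/n`
    (∀ l, ∀ᵐ ω ∂μ, |T l ω| ≤ (d₁ * d₂ : ℝ) / (n₁ * n₂ : ℝ)) ∧
    -- the Hoeffding bound
    (∀ (δo : ℝ), 0 < δo → ∀ (s : ℕ), 1 ≤ s →
      μ {ω | δo / s ≤
          |((ccaMatrix n₁ n₂ d₁ d₂ (H ω))ᵀ * ccaMatrix n₁ n₂ d₁ d₂ (H ω)) p q|}
        ≤ ENNReal.ofReal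
            (2 * Real.exp (-((n₁ : ℝ) * n₂) * δo ^ 2 /
              (2 * ((d₁ : ℝ) * d₂) * (s : ℝ) ^ 2)))) :=
  cca_gram_offdiag_independent_case_general n₁ n₂ d₁ d₂ hd₁ hd₂ Ω mΩ μ hμ H hmeas hindep hdist p q
    hmod T hT
end
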